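/- Let Q be a commutative unital quantale. The quantale space of all proper ideals of Q is sober: every irreducible closed subset is the closure of a unique point. -/

import Mathlib

namespace QuantalePaper

/-- An ideal of a complete lattice: nonempty, downward closed, closed under binary joins. -/
structure QIdeal (Q : Type*) [CompleteLattice Q] where
  carrier : Set Q
  nonempty' : carrier.Nonempty
  sup_mem' : ∀ ⦃x⦄, x ∈ carrier → ∀ ⦃y⦄, y ∈ carrier → x ⊔ y ∈ carrier
  lower' : ∀ ⦃x⦄, x ∈ carrier → ∀ ⦃l : Q⦄, l ≤ x → l ∈ carrier

namespace QIdeal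

variable {Q : Type*} [CompleteLattice Q]

instance : SetLike (QIdeal Q) Q where
  coe := carrier
  coe_injective := by rintro ⟨a,_,_,_⟩ ⟨b,_,_,_⟩ h; simpa using h

instance : PartialOrder (QIdeal Q) := .ofSetLike (QIdeal Q) Q

/-- A proper ideal. -/
def IsProper (I : QIdeal Q) : Prop := (⊤ : Q) ∉ I

/-- A maximal ideal: a proper ideal maximal among proper ideals. -/
def IsMaximal (I : QIdeal Q) : Prop :=
  I.IsProper ∧ ∀ J : QIdeal Q, J.IsProper → I ≤ J → J = I

/-- A prime ideal. -/
def IsPrime [Mul Q] (I : QIdeal Q) : Prop :=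
  I.IsProper ∧ ∀ x y : Q, x * y ∈ I → x ∈ I ∨ y ∈ I

end QIdeal

variable {Q : Type*} [CompleteLattice Q]

/-- The subbasic closed set `I↑ ∩ Σ` inside the subtype of a class `S` of ideals. -/
def up (S : Set (QIdeal Q)) (I : QIdeal Q) : Set ↥S := {J : ↥S | (I : Set Q) ⊆ (J : QIdeal Q)}

/-- The quantale topology on a class `S` of ideals, generated by the sets `up S I`
as a subbasis of closed sets. -/
def qTop (S : Set (QIdeal Q)) : TopologicalSpace ↥S :=
  .generateFrom {U | ∃ I : QIdeal Q, U = (up S I)ᶜ}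

/-- `X↑` for a set `X` of ideals: members of `S` containing the intersection `⋀X`,
with `∅↑ = ∅`. -/
def upSet (S : Set (QIdeal Q)) (X : Set (QIdeal Q)) : Set ↥S :=
  {J : ↥S | X.Nonempty ∧ ∀ x : Q, (∀ I ∈ X, x ∈ I) → x ∈ (J : QIdeal Q)}

/-!
The specialization order of the quantale topology is inclusion of ideals, which gives T0.
An irreducible closed set `K` has the intersection of its members as generic point: that
intersection is again a proper ideal, and it lies in `K` because, `K` being irreducible, it meets
every finite intersection of subbasic open sets around that point.
-/

namespace QIdeal

theorem bot_mem (I : QIdeal Q) : ⊥ ∈ I :=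
  let ⟨_, ha⟩ := I.nonempty'
  I.lower' ha bot_le

def sInter (X : Set (QIdeal Q)) : QIdeal Q where
  carrier := {q | ∀ I ∈ X, q ∈ I}
  nonempty' := ⟨⊥, fun I _ => I.bot_mem⟩
  sup_mem' _ hx _ hy I hI := I.sup_mem' (hx I hI) (hy I hI)
  lower' _ hx _ hl I hI := I.lower' (hx I hI) hl

theorem sInter_le {X : Set (QIdeal Q)} {I : QIdeal Q} (hI : I ∈ X) : sInter X ≤ I :=
  fun _ hq => hq I hI

theorem le_sInter {X : Set (QIdeal Q)} {J : QIdeal Q} (h : ∀ I ∈ X, J ≤ I) : J ≤ sInter X :=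
  fun _ hq I hI => h I hI hq

theorem isProper_sInter {X : Set (QIdeal Q)} (hX : ∃ I ∈ X, I.IsProper) :
    (sInter X).IsProper :=
  let ⟨_, hI, hIp⟩ := hX
  fun htop => hIp (sInter_le hI htop)

end QIdeal

section

attribute [local instance] qTop

variable {S : Set (QIdeal Q)}

theorem isClosed_up (I : QIdeal Q) : IsClosed (up S I) :=
  isOpen_compl_iff.1 <| TopologicalSpace.isOpen_generateFrom_of_mem ⟨I, rfl⟩

theorem mem_up {I : QIdeal Q} {J : S} : J ∈ up S I ↔ I ≤ J.1 :=
  Iff.rfl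

theorem IsOpen.mem_of_le {U : Set S} (hU : IsOpen U) {x y : S} (hxy : x.1 ≤ y.1) (hy : y ∈ U) :
    x ∈ U := by
  induction hU with
  | basic u hu =>
    obtain ⟨I, rfl⟩ := hu
    exact fun hx => hy (hx.trans hxy)
  | univ => trivial
  | inter u v _ _ ihu ihv => exact ⟨ihu hy.1, ihv hy.2⟩
  | sUnion s _ ih =>
    obtain ⟨t, ht, hyt⟩ := hy
    exact ⟨t, ht, ih t ht hyt⟩

theorem specializes_iff_le {x y : S} : x ⤳ y ↔ x.1 ≤ y.1 :=
  ⟨fun h => h.mem_closed (isClosed_up x.1) (mem_up.2 le_rfl),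
    fun h => specializes_iff_forall_open.2 fun _ hU => IsOpen.mem_of_le hU h⟩

theorem t0Space_qTop : T0Space S :=
  (t0Space_iff_inseparable S).2 fun _ _ h =>
    Subtype.ext <| le_antisymm (specializes_iff_le.1 h.specializes)
      (specializes_iff_le.1 h.specializes')

theorem sInter_mem_of_isIrreducible {K : Set S} (hK : IsIrreducible K) (hKc : IsClosed K)
    (hmem : QIdeal.sInter (Subtype.val '' K) ∈ S) : ⟨_, hmem⟩ ∈ K := by
  refine hKc.closure_subset <|
    (TopologicalSpace.isTopologicalBasis_of_subbasis rfl).mem_closure_iff.2 ?_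
  rintro _ ⟨f, ⟨hf, hfS⟩, rfl⟩ hx
  have hmeet : ∀ g ∈ hf.toFinset, (K ∩ g).Nonempty := by
    intro g hg
    rw [Set.Finite.mem_toFinset] at hg
    obtain ⟨I, rfl⟩ := hfS hg
    rw [Set.inter_compl_nonempty_iff]
    refine fun hKI => hx _ hg (QIdeal.le_sInter ?_)
    rintro _ ⟨J, hJ, rfl⟩
    exact hKI hJ
  have hopen : ∀ g ∈ hf.toFinset, IsOpen g := fun g hg =>
    TopologicalSpace.isOpen_generateFrom_of_mem (hfS (hf.mem_toFinset.1 hg))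
  simpa [Set.inter_comm] using isIrreducible_iff_sInter.1 hK _ hopen hmeet

theorem quasiSober_qTop (hS : ∀ X ⊆ S, X.Nonempty → QIdeal.sInter X ∈ S) : QuasiSober S where
  sober {K} hK hKc := by
    have hmem := hS _ (Set.image_subset_iff.2 fun J _ => J.2) (hK.nonempty.image _)
    refine ⟨⟨_, hmem⟩, Set.Subset.antisymm ?_ ?_⟩
    · exact closure_minimal (Set.singleton_subset_iff.2 (sInter_mem_of_isIrreducible hK hKc hmem))
        hKc
    · exact fun J hJ => specializes_iff_mem_closure.1 <|
        specializes_iff_le.2 (QIdeal.sInter_le ⟨J, hJ, rfl⟩)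

end

theorem stmt11_general :
    @QuasiSober ↥{I : QIdeal Q | I.IsProper} (qTop {I : QIdeal Q | I.IsProper}) ∧
    @T0Space ↥{I : QIdeal Q | I.IsProper} (qTop {I : QIdeal Q | I.IsProper}) :=
  ⟨quasiSober_qTop fun _ hXS ⟨I, hI⟩ => QIdeal.isProper_sInter ⟨I, hI, hXS hI⟩, t0Space_qTop⟩

theorem stmt11 [CommMonoid Q] [IsQuantale Q] (htop : (1 : Q) = ⊤) :
    @QuasiSober ↥{I : QIdeal Q | I.IsProper} (qTop {I : QIdeal Q | I.IsProper}) ∧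
    @T0Space ↥{I : QIdeal Q | I.IsProper} (qTop {I : QIdeal Q | I.IsProper}) :=
  stmt11_general

end QuantalePaper
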